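/- arXiv:1304.6351 — 4 statements merged into one kernel-verified Lean document; each statement's English description precedes it below -/
import Mathlib

section
/- For any two unit vectors a, b in ℂ^d, the maximum over all density matrices ρ of ⟨a|ρ|a⟩·⟨b|ρ|b⟩ equals (1/4)·(1 + |⟨a|b⟩|)². -/
/-!
Write `t = |⟨a|b⟩|`. Every vector `v` satisfies `|⟨a|v⟩|² + |⟨b|v⟩|² ≤ (1 + t) ‖v‖²`, i.e.
`(1 + t) I - |a⟩⟨a| - |b⟩⟨b|` is positive semidefinite; pairing it with a density matrix `ρ`
gives `⟨a|ρ|a⟩ + ⟨b|ρ|b⟩ ≤ 1 + t`, and AM-GM bounds the product by `(1 + t)² / 4`. Equality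
holds for the pure state along `a + γ b`, where the phase `γ` makes `γ ⟨a|b⟩ = t`: both
expectation values are then `(1 + t) / 2`.
-/

open scoped Matrix.Norms.L2Operator ComplexOrder
open Matrix
open scoped InnerProductSpace ComplexConjugate

section InnerProductSpace

variable {𝕜 E : Type*} [RCLike 𝕜] [NormedAddCommGroup E] [InnerProductSpace 𝕜 E]
  {a b : E}

theorem norm_smul_add_smul_sq_le (ha : ‖a‖ = 1) (hb : ‖b‖ = 1) (α β : 𝕜) :
    ‖α • a + β • b‖ ^ 2 ≤ (1 + ‖⟪a, b⟫_𝕜‖) * (‖α‖ ^ 2 + ‖β‖ ^ 2) := by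
  have hcross : RCLike.re ⟪α • a, β • b⟫_𝕜 ≤ ‖α‖ * ‖β‖ * ‖⟪a, b⟫_𝕜‖ :=
    calc RCLike.re ⟪α • a, β • b⟫_𝕜 ≤ ‖⟪α • a, β • b⟫_𝕜‖ := RCLike.re_le_norm _
      _ = ‖α‖ * ‖β‖ * ‖⟪a, b⟫_𝕜‖ := by
        rw [inner_smul_left, inner_smul_right, norm_mul, norm_mul, RCLike.norm_conj, mul_assoc]
  rw [norm_add_sq (𝕜 := 𝕜), norm_smul, norm_smul, ha, hb]
  nlinarith [two_mul_le_add_sq ‖α‖ ‖β‖, norm_nonneg ⟪a, b⟫_𝕜]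

theorem norm_inner_sq_add_norm_inner_sq_le (ha : ‖a‖ = 1) (hb : ‖b‖ = 1) (v : E) :
    ‖⟪a, v⟫_𝕜‖ ^ 2 + ‖⟪b, v⟫_𝕜‖ ^ 2 ≤ (1 + ‖⟪a, b⟫_𝕜‖) * ‖v‖ ^ 2 := by
  set S := ‖⟪a, v⟫_𝕜‖ ^ 2 + ‖⟪b, v⟫_𝕜‖ ^ 2
  set w := ⟪a, v⟫_𝕜 • a + ⟪b, v⟫_𝕜 • b
  -- testing `v` against `w` gives `S = re ⟪w, v⟫`, to which Cauchy–Schwarz applies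
  have hwv : RCLike.re ⟪w, v⟫_𝕜 = S := by
    simp only [w, inner_add_left, inner_smul_left, RCLike.conj_mul, map_add]
    norm_cast
  have hcs : S ≤ ‖w‖ * ‖v‖ := hwv ▸ re_inner_le_norm w v
  have hw : ‖w‖ ^ 2 ≤ (1 + ‖⟪a, b⟫_𝕜‖) * S := norm_smul_add_smul_sq_le ha hb _ _
  rcases (show 0 ≤ S by positivity).eq_or_lt with hS | hS
  · rw [← hS]
    positivity
  · refine le_of_mul_le_mul_left ?_ hS
    calc S * S ≤ (‖w‖ * ‖v‖) ^ 2 := by nlinarith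
      _ = ‖w‖ ^ 2 * ‖v‖ ^ 2 := mul_pow _ _ _
      _ ≤ (1 + ‖⟪a, b⟫_𝕜‖) * S * ‖v‖ ^ 2 := by gcongr
      _ = S * ((1 + ‖⟪a, b⟫_𝕜‖) * ‖v‖ ^ 2) := by ring

theorem RCLike.exists_norm_eq_one_mul_eq_norm (c : 𝕜) :
    ∃ γ : 𝕜, ‖γ‖ = 1 ∧ γ * c = ‖c‖ := by
  by_cases hc : c = 0
  · exact ⟨1, by simp, by simp [hc]⟩
  · have hc' : (‖c‖ : 𝕜) ≠ 0 := by simpa using hc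
    refine ⟨conj c / ‖c‖, by simp [norm_div, hc], ?_⟩
    rw [div_mul_eq_mul_div, RCLike.conj_mul, div_eq_iff hc']
    ring

theorem exists_norm_eq_one_norm_inner_sq_eq (ha : ‖a‖ = 1) (hb : ‖b‖ = 1) :
    ∃ w : E, ‖w‖ = 1 ∧ ‖⟪a, w⟫_𝕜‖ ^ 2 = (1 + ‖⟪a, b⟫_𝕜‖) / 2 ∧
      ‖⟪b, w⟫_𝕜‖ ^ 2 = (1 + ‖⟪a, b⟫_𝕜‖) / 2 := by
  obtain ⟨γ, hγ, hγc⟩ := RCLike.exists_norm_eq_one_mul_eq_norm ⟪a, b⟫_𝕜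
  set t := ‖⟪a, b⟫_𝕜‖
  set u := a + γ • b
  have hau : ⟪a, u⟫_𝕜 = ((1 + t : ℝ) : 𝕜) := by
    rw [inner_add_right, inner_smul_right, hγc, inner_self_eq_norm_sq_to_K, ha]
    push_cast
    ring
  have hbu : ⟪b, u⟫_𝕜 = γ * ((1 + t : ℝ) : 𝕜) :=
    calc ⟪b, u⟫_𝕜 = γ + conj ⟪a, b⟫_𝕜 := by
          rw [inner_add_right, inner_smul_right, inner_self_eq_norm_sq_to_K, hb, inner_conj_symm]
          push_cast
          ring
      _ = γ * (1 + conj (γ * ⟪a, b⟫_𝕜)) := by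
          rw [map_mul, mul_add, ← mul_assoc, RCLike.mul_conj, hγ]
          push_cast
          ring
      _ = γ * ((1 + t : ℝ) : 𝕜) := by
          rw [hγc, RCLike.conj_ofReal]
          push_cast
          rfl
  have hu : ‖u‖ ^ 2 = 2 * (1 + t) := by
    rw [norm_add_sq (𝕜 := 𝕜), inner_smul_right, hγc, norm_smul, ha, hb, hγ, RCLike.ofReal_re]
    ring
  have hu0 : ‖u‖ ≠ 0 := by
    intro h
    rw [h] at hu
    nlinarith [norm_nonneg ⟪a, b⟫_𝕜]
  have h1t : ‖((1 + t : ℝ) : 𝕜)‖ = 1 + t := by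
    rw [RCLike.norm_ofReal, abs_of_nonneg (by positivity)]
  have hnormalize (x : E) (hx : ‖⟪x, u⟫_𝕜‖ = 1 + t) :
      ‖⟪x, ((‖u‖⁻¹ : ℝ) : 𝕜) • u⟫_𝕜‖ ^ 2 = (1 + t) / 2 := by
    rw [inner_smul_right, norm_mul, mul_pow, hx, RCLike.norm_ofReal, sq_abs, inv_pow, hu]
    field_simp
  refine ⟨((‖u‖⁻¹ : ℝ) : 𝕜) • u, ?_, hnormalize a (by rw [hau, h1t]), hnormalize b ?_⟩
  · rw [norm_smul, RCLike.norm_ofReal, abs_inv, abs_norm, inv_mul_cancel₀ hu0]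
  · rw [hbu, norm_mul, hγ, h1t, one_mul]

end InnerProductSpace

section Matrix

variable {𝕜 n : Type*} [RCLike 𝕜] [Fintype n]

theorem star_dotProduct_eq_inner (x y : n → 𝕜) :
    star x ⬝ᵥ y = ⟪WithLp.toLp 2 x, WithLp.toLp 2 y⟫_𝕜 := by
  rw [EuclideanSpace.inner_toLp_toLp, dotProduct_comm]

theorem star_dotProduct_self_eq_norm_sq (x : n → 𝕜) :
    star x ⬝ᵥ x = ((‖WithLp.toLp 2 x‖ ^ 2 : ℝ) : 𝕜) := by
  rw [star_dotProduct_eq_inner, inner_self_eq_norm_sq_to_K]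
  push_cast
  rfl

theorem norm_toLp_eq_one {x : n → 𝕜} (hx : star x ⬝ᵥ x = 1) : ‖WithLp.toLp 2 x‖ = 1 := by
  rwa [star_dotProduct_self_eq_norm_sq, ← RCLike.ofReal_one, RCLike.ofReal_inj,
    pow_eq_one_iff_of_nonneg (norm_nonneg _) two_ne_zero] at hx

theorem star_dotProduct_vecMulVec_mulVec (x w : n → 𝕜) :
    star x ⬝ᵥ vecMulVec w (star w) *ᵥ x = ((‖star w ⬝ᵥ x‖ ^ 2 : ℝ) : 𝕜) := by
  rw [dotProduct_mulVec, vecMul_vecMulVec, smul_dotProduct, smul_eq_mul, star_dotProduct x w,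
    RCLike.star_def, RCLike.conj_mul]
  push_cast
  rfl

theorem trace_mul_vecMulVec_star (A : Matrix n n 𝕜) (x : n → 𝕜) :
    (A * vecMulVec x (star x)).trace = star x ⬝ᵥ A *ᵥ x := by
  rw [mul_vecMulVec, trace_vecMulVec, dotProduct_comm]

open scoped MatrixOrder in
theorem Matrix.PosSemidef.trace_mul_nonneg {A B : Matrix n n 𝕜} (hA : A.PosSemidef)
    (hB : B.PosSemidef) : 0 ≤ (A * B).trace := by
  classical
  obtain ⟨X, rfl⟩ := CStarAlgebra.nonneg_iff_eq_star_mul_self.mp hA.nonneg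
  rw [star_eq_conjTranspose, Matrix.mul_assoc, trace_mul_comm]
  exact (hB.mul_mul_conjTranspose_same X).trace_nonneg

theorem posSemidef_smul_one_sub_vecMulVec_sub_vecMulVec [DecidableEq n] {a b : n → 𝕜}
    (ha : star a ⬝ᵥ a = 1) (hb : star b ⬝ᵥ b = 1) :
    ((1 + ‖star a ⬝ᵥ b‖) • (1 : Matrix n n 𝕜) - vecMulVec a (star a)
      - vecMulVec b (star b)).PosSemidef := by
  refine .of_dotProduct_mulVec_nonneg ?_ fun v => ?_
  · exact ((isHermitian_one.smul (IsSelfAdjoint.all _)).sub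
      (posSemidef_vecMulVec_self_star a).isHermitian).sub
      (posSemidef_vecMulVec_self_star b).isHermitian
  · have key := norm_inner_sq_add_norm_inner_sq_le (𝕜 := 𝕜) (norm_toLp_eq_one ha)
      (norm_toLp_eq_one hb) (WithLp.toLp 2 v)
    rw [sub_mulVec, sub_mulVec, smul_mulVec, one_mulVec, dotProduct_sub, dotProduct_sub,
      dotProduct_smul, star_dotProduct_vecMulVec_mulVec, star_dotProduct_vecMulVec_mulVec,
      star_dotProduct_self_eq_norm_sq, RCLike.real_smul_eq_coe_mul, star_dotProduct_eq_inner,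
      star_dotProduct_eq_inner, star_dotProduct_eq_inner]
    norm_cast
    linarith

theorem Matrix.PosSemidef.re_dotProduct_mulVec_add_le {ρ : Matrix n n 𝕜} (hρ : ρ.PosSemidef)
    {a b : n → 𝕜} (ha : star a ⬝ᵥ a = 1) (hb : star b ⬝ᵥ b = 1) :
    RCLike.re (star a ⬝ᵥ ρ *ᵥ a) + RCLike.re (star b ⬝ᵥ ρ *ᵥ b) ≤
      (1 + ‖star a ⬝ᵥ b‖) * RCLike.re ρ.trace := by
  classical
  have h := hρ.trace_mul_nonneg (posSemidef_smul_one_sub_vecMulVec_sub_vecMulVec ha hb)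
  rw [Matrix.mul_sub, Matrix.mul_sub, trace_sub, trace_sub, Matrix.mul_smul, Matrix.mul_one,
    trace_smul, trace_mul_vecMulVec_star, trace_mul_vecMulVec_star, RCLike.nonneg_iff] at h
  simp only [map_sub, RCLike.smul_re] at h
  linarith [h.1]

end Matrix

/-- For any two unit vectors `a, b` in `ℂ^d`, the maximum over all
density matrices `ρ` of `⟨a|ρ|a⟩·⟨b|ρ|b⟩` equals `(1/4)·(1 + |⟨a|b⟩|)²`. -/
theorem stmt_1 (d : ℕ) (a b : Fin d → ℂ)
    (ha : star a ⬝ᵥ a = 1) (hb : star b ⬝ᵥ b = 1) :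
    IsGreatest {x : ℝ | ∃ ρ : Matrix (Fin d) (Fin d) ℂ,
        ρ.PosSemidef ∧ ρ.trace = 1 ∧
        x = (star a ⬝ᵥ ρ.mulVec a).re * (star b ⬝ᵥ ρ.mulVec b).re}
      ((1 / 4) * (1 + ‖star a ⬝ᵥ b‖) ^ 2) := by
  constructor
  · obtain ⟨w, hw, hwa, hwb⟩ := exists_norm_eq_one_norm_inner_sq_eq (𝕜 := ℂ)
      (norm_toLp_eq_one ha) (norm_toLp_eq_one hb)
    refine ⟨vecMulVec w.ofLp (star w.ofLp), posSemidef_vecMulVec_self_star _, ?_, ?_⟩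
    · rw [trace_vecMulVec, dotProduct_comm, star_dotProduct_self_eq_norm_sq]
      simp [hw]
    · rw [star_dotProduct_vecMulVec_mulVec, star_dotProduct_vecMulVec_mulVec,
        star_dotProduct_eq_inner, star_dotProduct_eq_inner, star_dotProduct_eq_inner]
      simp only [WithLp.toLp_ofLp, norm_inner_symm w, hwa, hwb, ← RCLike.re_to_complex,
        RCLike.ofReal_re]
      ring
  · rintro _ ⟨ρ, hρ, htr, rfl⟩
    have hsum := hρ.re_dotProduct_mulVec_add_le ha hb
    have hpa := hρ.re_dotProduct_nonneg a
    have hpb := hρ.re_dotProduct_nonneg b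
    simp only [RCLike.re_to_complex, htr, Complex.one_re, mul_one] at hsum hpa hpb
    nlinarith [sq_nonneg ((star a ⬝ᵥ ρ *ᵥ a).re - (star b ⬝ᵥ ρ *ᵥ b).re)]
end

section
/- If A and B are orthogonal projections on ℂ^d with ‖A+B‖_∞ = 1, then AB = BA = 0. -/
/-!
In a C⋆-algebra a self-adjoint `a` satisfies `a ≤ ‖a‖ • 1`, so `‖p + q‖ ≤ 1` gives `p + q ≤ 1`
for star projections `p, q`. Then `q ≤ 1 - p`, and between projections this order relation means
`(1 - p) * q = q`, i.e. `p * q = 0`. Matrices with the L2 operator norm form such an algebra.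
-/

open scoped Matrix.Norms.L2Operator

namespace IsStarProjection

variable {A : Type*} [CStarAlgebra A] [PartialOrder A] [StarOrderedRing A] {p q : A}

theorem add_le_one_of_norm_add_le_one (hp : IsStarProjection p) (hq : IsStarProjection q)
    (h : ‖p + q‖ ≤ 1) : p + q ≤ 1 :=
  calc p + q ≤ algebraMap ℝ A ‖p + q‖ :=
        (hp.isSelfAdjoint.add hq.isSelfAdjoint).le_algebraMap_norm_self
    _ ≤ algebraMap ℝ A 1 := algebraMap_mono A h
    _ = 1 := map_one _

theorem mul_eq_zero_of_add_le_one (hp : IsStarProjection p) (hq : IsStarProjection q)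
    (h : p + q ≤ 1) : p * q = 0 := by
  have hq_le : q ≤ 1 - p := le_sub_iff_add_le'.mpr h
  have hq_fixed : (1 - p) * q = q := (hq.le_iff_mul_eq_right hp.one_sub).mp hq_le
  rwa [sub_mul, one_mul, sub_eq_self] at hq_fixed

theorem mul_eq_zero_of_norm_add_le_one (hp : IsStarProjection p) (hq : IsStarProjection q)
    (h : ‖p + q‖ ≤ 1) : p * q = 0 :=
  hp.mul_eq_zero_of_add_le_one hq (hp.add_le_one_of_norm_add_le_one hq h)

end IsStarProjection

/-- If `A` and `B` are orthogonal projections on `ℂ^d` with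
`‖A+B‖_∞ = 1`, then `AB = BA = 0`. -/
theorem stmt_4 (d : ℕ) (A B : Matrix (Fin d) (Fin d) ℂ)
    (hA : A.IsHermitian) (hA2 : A * A = A)
    (hB : B.IsHermitian) (hB2 : B * B = B)
    (hnorm : ‖A + B‖ = 1) :
    A * B = 0 ∧ B * A = 0 := by
  have hpA : IsStarProjection A := ⟨hA2, hA⟩
  have hpB : IsStarProjection B := ⟨hB2, hB⟩
  open scoped MatrixOrder in
  exact ⟨hpA.mul_eq_zero_of_norm_add_le_one hpB hnorm.le,
    hpB.mul_eq_zero_of_norm_add_le_one hpA (by rw [add_comm, hnorm])⟩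
end

section
/- Let A, B be orthogonal projections on ℂ^d with ‖A+B‖_∞ > 1, let y be a unit eigenvector with (A+B)y = ‖A+B‖_∞ · y, and set a = Ay/‖Ay‖ and b = By/‖By‖ (both denominators are nonzero). Then ‖ |a⟩⟨a| + |b⟩⟨b| ‖_∞ = ‖A+B‖_∞. -/
/-!
Put `a = Ay/‖Ay‖` and `b = By/‖By‖`. Since `Aa = a`, the rank-one projection `|a⟩⟨a|` lies
below `A`, and likewise `|b⟩⟨b| ≤ B`; hence `0 ≤ |a⟩⟨a| + |b⟩⟨b| ≤ A + B`, and the norm is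
monotone on positive elements of a C⋆-algebra. Conversely `|a⟩⟨a| y = Ay` and `|b⟩⟨b| y = By`,
so `y` is an eigenvector of `|a⟩⟨a| + |b⟩⟨b|` with eigenvalue `‖A + B‖`. The denominators do not
vanish: if `Ay = 0`, then `‖A + B‖ > 1` would be an eigenvalue of the projection `B`.
-/

open scoped Matrix.Norms.L2Operator ComplexOrder MatrixOrder
open Matrix

section Field

variable {K n : Type*} [Field K] [Fintype n]

theorem IsIdempotentElem.eq_zero_or_one_of_mulVec_eq_smul {B : Matrix n n K}
    (hB : IsIdempotentElem B) {y : n → K} {μ : K} (hy : y ≠ 0) (hBy : B *ᵥ y = μ • y) :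
    μ = 0 ∨ μ = 1 := by
  have h : (μ * μ) • y = μ • y := by
    rw [mul_smul, ← hBy, ← mulVec_smul, ← hBy, mulVec_mulVec, hB.eq]
  exact IsIdempotentElem.iff_eq_zero_or_one.1 (smul_left_injective K hy h)

theorem IsIdempotentElem.mulVec_ne_zero_of_add_mulVec_eq_smul {A B : Matrix n n K}
    (hB : IsIdempotentElem B) {y : n → K} {μ : K} (hy : y ≠ 0) (hμ : μ ≠ 0 ∧ μ ≠ 1)
    (h : (A + B) *ᵥ y = μ • y) : A *ᵥ y ≠ 0 := by
  intro hAy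
  rw [add_mulVec, hAy, zero_add] at h
  exact (hB.eq_zero_or_one_of_mulVec_eq_smul hy h).elim hμ.1 hμ.2

end Field

namespace Matrix

open RCLike

variable {𝕜 n : Type*} [RCLike 𝕜] [Fintype n]

theorem isStarProjection_vecMulVec_self_star {a : n → 𝕜} (ha : star a ⬝ᵥ a = 1) :
    IsStarProjection (vecMulVec a (star a)) where
  isIdempotentElem := by
    rw [IsIdempotentElem, vecMulVec_mul_vecMulVec, ha, one_smul]
  isSelfAdjoint := by
    rw [← isHermitian_iff_isSelfAdjoint, IsHermitian, conjTranspose_vecMulVec, star_star]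

theorem vecMulVec_self_star_le {A : Matrix n n 𝕜} (hA : IsStarProjection A) {a : n → 𝕜}
    (ha : star a ⬝ᵥ a = 1) (hAa : A *ᵥ a = a) : vecMulVec a (star a) ≤ A :=
  (isStarProjection_vecMulVec_self_star ha).le_of_mul_eq_right hA <| by
    rw [mul_vecMulVec, hAa]

theorem norm_le_l2_opNorm_of_mulVec_eq_smul [DecidableEq n] {M : Matrix n n 𝕜} {y : n → 𝕜}
    {μ : 𝕜} (hy : y ≠ 0) (hMy : M *ᵥ y = μ • y) : ‖μ‖ ≤ ‖M‖ := by
  have h := l2_opNorm_mulVec M (WithLp.toLp 2 y)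
  rw [hMy, map_smul, norm_smul] at h
  exact le_of_mul_le_mul_right h (norm_pos_iff.2 (by simpa using hy))

theorem star_dotProduct_self_eq_ofReal_re (w : n → 𝕜) :
    star w ⬝ᵥ w = (re (star w ⬝ᵥ w) : 𝕜) :=
  (conj_eq_iff_re.1 (conj_eq_iff_im.2 (nonneg_iff.1 (dotProduct_star_self_nonneg w)).2)).symm

theorem ofReal_sqrt_re_star_dotProduct_self_sq (w : n → 𝕜) :
    (√(re (star w ⬝ᵥ w)) : 𝕜) ^ 2 = star w ⬝ᵥ w := by
  rw [← ofReal_pow, Real.sq_sqrt (nonneg_iff.1 (dotProduct_star_self_nonneg w)).1,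
    ← star_dotProduct_self_eq_ofReal_re]

theorem sqrt_re_star_dotProduct_self_ne_zero {w : n → 𝕜} (hw : w ≠ 0) :
    √(re (star w ⬝ᵥ w)) ≠ 0 :=
  Real.sqrt_ne_zero'.2 (pos_iff.1 (dotProduct_star_self_pos_iff.2 hw)).1

/-- `w / ‖w‖`, written as in the statement; `normalized 0 = 0`. -/
noncomputable def normalized (w : n → 𝕜) : n → 𝕜 := (√(re (star w ⬝ᵥ w)) : 𝕜)⁻¹ • w

theorem star_normalized_dotProduct_normalized {w : n → 𝕜} (hw : w ≠ 0) :
    star (normalized w) ⬝ᵥ normalized w = 1 := by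
  have hc : (√(re (star w ⬝ᵥ w)) : 𝕜) ≠ 0 := by
    exact_mod_cast sqrt_re_star_dotProduct_self_ne_zero hw
  have hsq := ofReal_sqrt_re_star_dotProduct_self_sq w
  rw [normalized, star_smul, smul_dotProduct, dotProduct_smul, star_inv₀, star_def,
    conj_ofReal, smul_eq_mul, smul_eq_mul]
  generalize (√(re (star w ⬝ᵥ w)) : 𝕜) = c at hc hsq ⊢
  rw [← hsq]
  field_simp

theorem mulVec_normalized_of_mulVec_eq {A : Matrix n n 𝕜} {w : n → 𝕜} (hAw : A *ᵥ w = w) :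
    A *ᵥ normalized w = normalized w := by
  rw [normalized, mulVec_smul, hAw]

theorem _root_.IsStarProjection.star_mulVec_dotProduct_mulVec {A : Matrix n n 𝕜}
    (hA : IsStarProjection A) (y : n → 𝕜) :
    star (A *ᵥ y) ⬝ᵥ (A *ᵥ y) = star (A *ᵥ y) ⬝ᵥ y := by
  rw [dotProduct_mulVec, star_mulVec, vecMul_vecMul, ← star_eq_conjTranspose,
    hA.isSelfAdjoint.star_eq, hA.isIdempotentElem.eq]

theorem _root_.IsStarProjection.vecMulVec_normalized_mulVec {A : Matrix n n 𝕜}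
    (hA : IsStarProjection A) (y : n → 𝕜) :
    vecMulVec (normalized (A *ᵥ y)) (star (normalized (A *ᵥ y))) *ᵥ y = A *ᵥ y := by
  rcases eq_or_ne (A *ᵥ y) 0 with hAy | hAy
  · simp [normalized, hAy]
  have hc : (√(re (star (A *ᵥ y) ⬝ᵥ (A *ᵥ y))) : 𝕜) ≠ 0 := by
    exact_mod_cast sqrt_re_star_dotProduct_self_ne_zero hAy
  have hsq := (ofReal_sqrt_re_star_dotProduct_self_sq (A *ᵥ y)).trans
    (hA.star_mulVec_dotProduct_mulVec y)
  rw [vecMulVec_mulVec, op_smul_eq_smul, normalized, star_smul, smul_dotProduct, star_inv₀,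
    star_def, conj_ofReal, smul_smul, smul_eq_mul, ← hsq]
  generalize (√(re (star (A *ᵥ y) ⬝ᵥ (A *ᵥ y))) : 𝕜) = c at hc ⊢
  rw [show c⁻¹ * c ^ 2 * c⁻¹ = 1 by field_simp, one_smul]

end Matrix

/-- Let `A, B` be orthogonal projections on `ℂ^d` with `‖A+B‖_∞ > 1`,
let `y` be a unit eigenvector with `(A+B)y = ‖A+B‖_∞ · y`, and set `a = Ay/‖Ay‖`,
`b = By/‖By‖` (both denominators are nonzero).  Then
`‖ |a⟩⟨a| + |b⟩⟨b| ‖_∞ = ‖A+B‖_∞`. -/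
theorem stmt_6 (d : ℕ) (A B : Matrix (Fin d) (Fin d) ℂ)
    (hA : A.IsHermitian) (hA2 : A * A = A)
    (hB : B.IsHermitian) (hB2 : B * B = B)
    (hnorm : 1 < ‖A + B‖)
    (y : Fin d → ℂ) (hy : star y ⬝ᵥ y = 1)
    (heig : (A + B).mulVec y = (‖A + B‖ : ℂ) • y) :
    Real.sqrt ((star (A.mulVec y) ⬝ᵥ A.mulVec y).re) ≠ 0 ∧
    Real.sqrt ((star (B.mulVec y) ⬝ᵥ B.mulVec y).re) ≠ 0 ∧
    (let a : Fin d → ℂ :=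
        ((Real.sqrt ((star (A.mulVec y) ⬝ᵥ A.mulVec y).re) : ℂ)⁻¹) • A.mulVec y
     let b : Fin d → ℂ :=
        ((Real.sqrt ((star (B.mulVec y) ⬝ᵥ B.mulVec y).re) : ℂ)⁻¹) • B.mulVec y
     ‖vecMulVec a (star a) + vecMulVec b (star b)‖ = ‖A + B‖) := by
  have hPA : IsStarProjection A := ⟨hA2, hA.isSelfAdjoint⟩
  have hPB : IsStarProjection B := ⟨hB2, hB.isSelfAdjoint⟩
  have hy0 : y ≠ 0 := by rintro rfl; simp at hy
  have hμ : (‖A + B‖ : ℂ) ≠ 0 ∧ (‖A + B‖ : ℂ) ≠ 1 := by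
    constructor <;> norm_cast <;> linarith
  have hAy : A *ᵥ y ≠ 0 := hPB.isIdempotentElem.mulVec_ne_zero_of_add_mulVec_eq_smul hy0 hμ heig
  have hBy : B *ᵥ y ≠ 0 :=
    hPA.isIdempotentElem.mulVec_ne_zero_of_add_mulVec_eq_smul hy0 hμ (add_comm A B ▸ heig)
  refine ⟨sqrt_re_star_dotProduct_self_ne_zero hAy, sqrt_re_star_dotProduct_self_ne_zero hBy, ?_⟩
  set P := vecMulVec (normalized (A *ᵥ y)) (star (normalized (A *ᵥ y))) +
    vecMulVec (normalized (B *ᵥ y)) (star (normalized (B *ᵥ y)))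
  change ‖P‖ = ‖A + B‖
  have hPle : P ≤ A + B := add_le_add
    (vecMulVec_self_star_le hPA (star_normalized_dotProduct_normalized hAy)
      (mulVec_normalized_of_mulVec_eq (by rw [mulVec_mulVec, hA2])))
    (vecMulVec_self_star_le hPB (star_normalized_dotProduct_normalized hBy)
      (mulVec_normalized_of_mulVec_eq (by rw [mulVec_mulVec, hB2])))
  have hPy : P *ᵥ y = (‖A + B‖ : ℂ) • y := by
    rw [add_mulVec, hPA.vecMulVec_normalized_mulVec, hPB.vecMulVec_normalized_mulVec,
      ← add_mulVec, heig]
  refine le_antisymm (CStarAlgebra.norm_le_norm_of_nonneg_of_le ?_ hPle) ?_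
  · exact add_nonneg (posSemidef_vecMulVec_self_star _).nonneg
      (posSemidef_vecMulVec_self_star _).nonneg
  · simpa using norm_le_l2_opNorm_of_mulVec_eq_smul hy0 hPy
end

section
/- For a rank-one projection |a⟩⟨a| and an orthogonal projection P on ℂ^d, ‖ |a⟩⟨a| + P ‖_∞ = 1 + ‖P a‖ whenever a is not in the range of P, and equals 2 if a is in the range of P. -/
/-!
Put `t = ‖P a‖`. The operator `T = |a⟩⟨a| + P` is symmetric with quadratic form
`|⟪a, x⟫|² + ‖P x‖²`, so `‖T‖` is the supremum of this form on the unit sphere. Splitting along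
`P` gives `⟪a, x⟫ = ⟪P a, P x⟫ + ⟪a - P a, x - P x⟫`, and Cauchy–Schwarz together with
`t² + ‖a - P a‖² = 1` bounds the form by `(1 + t) ‖x‖²`. Conversely `t a + P a` is an eigenvector
of `T` for the eigenvalue `1 + t` (if `t = 0`, then `T a = a`). If `P a = a`, then `t = 1`.
-/

open scoped Matrix.Norms.L2Operator InnerProductSpace
open Matrix RCLike InnerProductSpace

variable {𝕜 E : Type*} [RCLike 𝕜] [NormedAddCommGroup E] [InnerProductSpace 𝕜 E]

theorem mul_add_mul_sq_add_sq_le {t s α β : ℝ} (ht : 0 ≤ t) (hts : t ^ 2 + s ^ 2 = 1) :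
    (t * α + s * β) ^ 2 + α ^ 2 ≤ (1 + t) * (α ^ 2 + β ^ 2) := by
  have key : (1 + t) * ((1 + t) * (α ^ 2 + β ^ 2) - ((t * α + s * β) ^ 2 + α ^ 2))
      = t * (s * α - (1 + t) * β) ^ 2 := by
    linear_combination (-(t * α ^ 2 + (1 + t) * β ^ 2)) * hts
  nlinarith [mul_nonneg ht (sq_nonneg (s * α - (1 + t) * β))]

namespace LinearMap.IsSymmetricProjection

variable {p : E →ₗ[𝕜] E}

theorem inner_eq_inner_apply_add_inner_sub_apply (hp : p.IsSymmetricProjection) (x y : E) :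
    ⟪x, y⟫_𝕜 = ⟪p x, p y⟫_𝕜 + ⟪x - p x, y - p y⟫_𝕜 := by
  have hpp : ⟪p x, p y⟫_𝕜 = ⟪x, p y⟫_𝕜 := by
    rw [hp.isSymmetric, ← Module.End.mul_apply, hp.isIdempotentElem.eq]
  have hp1 : ⟪p x, y⟫_𝕜 = ⟪x, p y⟫_𝕜 := hp.isSymmetric x y
  simp only [inner_sub_left, inner_sub_right, hpp, hp1]
  ring

theorem norm_sq_eq_norm_apply_sq_add_norm_sub_apply_sq (hp : p.IsSymmetricProjection) (x : E) :
    ‖x‖ ^ 2 = ‖p x‖ ^ 2 + ‖x - p x‖ ^ 2 := by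
  simpa only [inner_self_eq_norm_sq, map_add] using
    congrArg re (hp.inner_eq_inner_apply_add_inner_sub_apply x x)

theorem inner_self_apply_eq_norm_sq (hp : p.IsSymmetricProjection) (x : E) :
    ⟪x, p x⟫_𝕜 = (‖p x‖ : 𝕜) ^ 2 := by
  rw [← inner_self_eq_norm_sq_to_K, hp.isSymmetric, ← Module.End.mul_apply,
    hp.isIdempotentElem.eq]

theorem norm_inner_sq_add_norm_apply_sq_le (hp : p.IsSymmetricProjection) {a : E}
    (ha : ‖a‖ = 1) (x : E) : ‖⟪a, x⟫_𝕜‖ ^ 2 + ‖p x‖ ^ 2 ≤ (1 + ‖p a‖) * ‖x‖ ^ 2 := by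
  have hinner : ‖⟪a, x⟫_𝕜‖ ≤ ‖p a‖ * ‖p x‖ + ‖a - p a‖ * ‖x - p x‖ := by
    rw [hp.inner_eq_inner_apply_add_inner_sub_apply]
    exact (norm_add_le _ _).trans (add_le_add (norm_inner_le_norm _ _) (norm_inner_le_norm _ _))
  have hsq : ‖p a‖ ^ 2 + ‖a - p a‖ ^ 2 = 1 := by
    rw [← hp.norm_sq_eq_norm_apply_sq_add_norm_sub_apply_sq, ha, one_pow]
  calc ‖⟪a, x⟫_𝕜‖ ^ 2 + ‖p x‖ ^ 2
      ≤ (‖p a‖ * ‖p x‖ + ‖a - p a‖ * ‖x - p x‖) ^ 2 + ‖p x‖ ^ 2 := by gcongr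
    _ ≤ (1 + ‖p a‖) * (‖p x‖ ^ 2 + ‖x - p x‖ ^ 2) :=
      mul_add_mul_sq_add_sq_le (norm_nonneg _) hsq
    _ = (1 + ‖p a‖) * ‖x‖ ^ 2 := by rw [← hp.norm_sq_eq_norm_apply_sq_add_norm_sub_apply_sq]

end LinearMap.IsSymmetricProjection

namespace ContinuousLinearMap

theorem opNorm_le_of_abs_re_inner_apply_self_le {T : E →L[𝕜] E}
    (hT : (T : E →ₗ[𝕜] E).IsSymmetric) {M : ℝ} (hM : 0 ≤ M)
    (h : ∀ x, |re ⟪T x, x⟫_𝕜| ≤ M * ‖x‖ ^ 2) : ‖T‖ ≤ M := by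
  rw [T.norm_eq_iSup_rayleighQuotient hT]
  refine ciSup_le fun x => ?_
  rcases eq_or_ne x 0 with rfl | hx
  · simpa using hM
  rw [rayleighQuotient, reApplyInnerSelf_apply, abs_div, abs_sq, div_le_iff₀ (by positivity)]
  exact h x

theorem norm_le_opNorm_of_apply_eq_smul (T : E →L[𝕜] E) {c : 𝕜} {x : E} (hx : x ≠ 0)
    (h : T x = c • x) : ‖c‖ ≤ ‖T‖ := by
  have := T.le_opNorm x
  rw [h, norm_smul] at this
  exact le_of_mul_le_mul_right this (norm_pos_iff.mpr hx)

end ContinuousLinearMap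

namespace InnerProductSpace

variable {p : E →L[𝕜] E}

theorem re_inner_rankOne_self_add_apply_self (hp : (p : E →ₗ[𝕜] E).IsSymmetricProjection)
    (a x : E) : re ⟪(rankOne 𝕜 a a + p) x, x⟫_𝕜 = ‖⟪a, x⟫_𝕜‖ ^ 2 + ‖p x‖ ^ 2 := by
  rw [_root_.add_apply, inner_add_left, map_add, rankOne_apply, inner_smul_left, RCLike.conj_mul,
    ← ContinuousLinearMap.coe_coe p, hp.isSymmetric, hp.inner_self_apply_eq_norm_sq]
  norm_cast

theorem rankOne_self_add_apply_eigenvector (hp : (p : E →ₗ[𝕜] E).IsSymmetricProjection)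
    {a : E} (ha : ‖a‖ = 1) :
    (rankOne 𝕜 a a + p) ((‖p a‖ : 𝕜) • a + p a) =
      ((1 + ‖p a‖ : ℝ) : 𝕜) • ((‖p a‖ : 𝕜) • a + p a) := by
  have hppa : p (p a) = p a := congr($(hp.isIdempotentElem.eq) a)
  have hpa : ⟪a, p a⟫_𝕜 = (‖p a‖ : 𝕜) ^ 2 := hp.inner_self_apply_eq_norm_sq a
  simp only [_root_.add_apply, rankOne_apply, map_add, map_smul, hppa, hpa,
    inner_self_eq_norm_sq_to_K, ha]
  push_cast
  module

theorem norm_rankOne_self_add (hp : (p : E →ₗ[𝕜] E).IsSymmetricProjection) {a : E}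
    (ha : ‖a‖ = 1) : ‖rankOne 𝕜 a a + p‖ = 1 + ‖p a‖ := by
  set T := rankOne 𝕜 a a + p
  refine le_antisymm ?_ ?_
  · refine ContinuousLinearMap.opNorm_le_of_abs_re_inner_apply_self_le
      ((isSymmetric_rankOne_self a).add hp.isSymmetric) (by positivity) fun x => ?_
    rw [re_inner_rankOne_self_add_apply_self hp, abs_of_nonneg (by positivity)]
    exact hp.norm_inner_sq_add_norm_apply_sq_le ha x
  rcases (norm_nonneg (p a)).eq_or_lt with ht | ht
  · have hpa : p a = 0 := norm_eq_zero.mp ht.symm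
    have hTa : T a = (1 : 𝕜) • a := by simp [T, hpa, inner_self_eq_norm_sq_to_K, ha]
    simpa [← ht] using
      T.norm_le_opNorm_of_apply_eq_smul (norm_ne_zero_iff.mp (ha ▸ one_ne_zero)) hTa
  · have hx : (‖p a‖ : 𝕜) • a + p a ≠ 0 := by
      intro h0
      have hpa : ⟪a, p a⟫_𝕜 = (‖p a‖ : 𝕜) ^ 2 := hp.inner_self_apply_eq_norm_sq a
      have := congrArg (fun y => re ⟪a, y⟫_𝕜) h0
      simp [inner_add_right, inner_smul_right, inner_self_eq_norm_sq_to_K, ha, hpa] at this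
      nlinarith
    have := T.norm_le_opNorm_of_apply_eq_smul hx (rankOne_self_add_apply_eigenvector hp ha)
    rwa [RCLike.norm_ofReal, abs_of_pos (by positivity)] at this

end InnerProductSpace

namespace Matrix

variable {n : Type*} [Fintype n] [DecidableEq n]

theorem toEuclideanCLM_vecMulVec_star (x y : n → 𝕜) :
    toEuclideanCLM (𝕜 := 𝕜) (vecMulVec x (star y)) =
      rankOne 𝕜 (WithLp.toLp 2 x) (WithLp.toLp 2 y) := by
  ext1 z
  apply WithLp.ofLp_injective
  simp [vecMulVec_mulVec, EuclideanSpace.inner_eq_star_dotProduct, dotProduct_comm]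

theorem isSymmetricProjection_toEuclideanCLM {P : Matrix n n 𝕜} (hP : P.IsHermitian)
    (hP2 : P * P = P) :
    (toEuclideanCLM (𝕜 := 𝕜) P : EuclideanSpace 𝕜 n →ₗ[𝕜] _).IsSymmetricProjection where
  isIdempotentElem := by
    rw [IsIdempotentElem, ← ContinuousLinearMap.toLinearMap_mul, ← map_mul, hP2]
  isSymmetric := isSymmetric_toEuclideanLin_iff.mpr hP

end Matrix

/-- For a rank-one projection `|a⟩⟨a|` and an orthogonal projection
`P` on `ℂ^d`, `‖ |a⟩⟨a| + P ‖_∞ = 1 + ‖Pa‖` whenever `a` is not in the range of `P`,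
and equals `2` if `a` is in the range of `P`. -/
theorem stmt_10 (d : ℕ) (a : Fin d → ℂ) (ha : star a ⬝ᵥ a = 1)
    (P : Matrix (Fin d) (Fin d) ℂ)
    (hP : P.IsHermitian) (hP2 : P * P = P) :
    (P.mulVec a ≠ a →
      ‖vecMulVec a (star a) + P‖ =
        1 + Real.sqrt ((star (P.mulVec a) ⬝ᵥ P.mulVec a).re)) ∧
    (P.mulVec a = a → ‖vecMulVec a (star a) + P‖ = 2) := by
  have hnorm (x : Fin d → ℂ) : ‖WithLp.toLp 2 x‖ = √(star x ⬝ᵥ x).re := by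
    rw [norm_eq_sqrt_re_inner (𝕜 := ℂ), EuclideanSpace.inner_toLp_toLp, dotProduct_comm,
      RCLike.re_to_complex]
  have ha1 : ‖WithLp.toLp 2 a‖ = 1 := by simp [hnorm, ha]
  have key : ‖vecMulVec a (star a) + P‖ = 1 + ‖WithLp.toLp 2 (P *ᵥ a)‖ := by
    rw [cstar_norm_def, map_add, toEuclideanCLM_vecMulVec_star,
      norm_rankOne_self_add (isSymmetricProjection_toEuclideanCLM hP hP2) ha1,
      toEuclideanCLM_toLp]
  exact ⟨fun _ => by rw [key, hnorm], fun h => by rw [key, h, ha1]; norm_num⟩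
end
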